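/- Let k be a finite field, let (s_1, t_1), …, (s_m, t_m) be data with s_j ∈ k^n and t_j ∈ k, and let M_X ⊆ k[x_1, …, x_n] be the ideal generated by all monomials m(s_j, s_l) = ∏_{i : (s_j)_i ≠ (s_l)_i} x_i over pairs j, l with t_j ≠ t_l. Then a prime ideal P of k[x_1, …, x_n] is a minimal prime over M_X if and only if P = ⟨x_i : i ∈ G⟩ for some subset G ⊆ {1, …, n} that is minimal with respect to inclusion among all subsets G' for which there exists a polynomial f ∈ k[x_i : i ∈ G'] with f(s_j) = t_j for all j. -/

import Mathlib

/-!
A prime ideal contains a squarefree monomial iff it contains one of its variables. Hence a prime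
`P ⊇ M_X` contains the prime `⟨x_i : x_i ∈ P⟩`, which still contains `M_X`, so the minimal primes
are the ideals `⟨x_i : i ∈ G⟩ ⊇ M_X` with `G` minimal. Such a containment says that data points
with different values differ at a coordinate of `G`, i.e. that `t` factors through restricting the
points to `G`; over a finite field every function on `k^G` is a polynomial, so this is exactly the
existence of a fitting polynomial in the variables of `G`.
-/

/-- The square-free monomial `m(p, q) = ∏_{i : p i ≠ q i} x i` recording the
coordinates in which the points `p, q ∈ k^n` differ. -/
noncomputable def pairMonomial {k : Type*} [Field k] [DecidableEq k] {n : ℕ}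
    (p q : Fin n → k) : MvPolynomial (Fin n) k :=
  ∏ i ∈ Finset.univ.filter (fun i => p i ≠ q i), MvPolynomial.X i

open MvPolynomial Function

section SpanX

variable {σ R : Type*} [CommRing R]

theorem span_X_image_le_iff {G : Set σ} {I : Ideal (MvPolynomial σ R)} :
    Ideal.span (X '' G) ≤ I ↔ ∀ i ∈ G, X i ∈ I := by
  rw [Ideal.span_le, Set.image_subset_iff]
  rfl

/- Setting the variables of `G` to zero is a ring endomorphism that is the identity modulo
`⟨X i : i ∈ G⟩` and kills exactly that ideal. -/
instance isPrime_span_X_image [IsDomain R] (G : Set σ) :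
    (Ideal.span (X '' G : Set (MvPolynomial σ R))).IsPrime := by
  classical
  set I := Ideal.span (X '' G : Set (MvPolynomial σ R))
  let e : MvPolynomial σ R →ₐ[R] MvPolynomial σ R := aeval fun i => if i ∈ G then 0 else X i
  have hmk : (Ideal.Quotient.mkₐ R I).comp e = Ideal.Quotient.mkₐ R I := by
    refine MvPolynomial.algHom_ext fun i => ?_
    by_cases hi : i ∈ G
    · have hXi : Ideal.Quotient.mk I (X i) = 0 :=
        Ideal.Quotient.eq_zero_iff_mem.2 (Ideal.subset_span ⟨i, hi, rfl⟩)
      simp [e, hi, hXi]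
    · simp [e, hi]
  have hker : RingHom.ker e = I := by
    refine le_antisymm (fun f hf => ?_) (span_X_image_le_iff.2 fun i hi => by simp [e, hi])
    rw [← Ideal.Quotient.eq_zero_iff_mem, ← Ideal.Quotient.mkₐ_eq_mk R, ← hmk]
    simp [RingHom.mem_ker.1 hf]
  exact hker ▸ RingHom.ker_isPrime e

theorem X_mem_span_X_image_iff [Nontrivial R] {G : Set σ} {i : σ} :
    X i ∈ Ideal.span (X '' G : Set (MvPolynomial σ R)) ↔ i ∈ G := by
  simp [mem_ideal_span_X_image, support_X, Finsupp.single_apply_eq_zero]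

theorem span_X_image_le_span_X_image_iff [Nontrivial R] {G G' : Set σ} :
    Ideal.span (X '' G : Set (MvPolynomial σ R)) ≤ Ideal.span (X '' G') ↔ G ⊆ G' := by
  simp only [span_X_image_le_iff, X_mem_span_X_image_iff]
  rfl

theorem span_X_image_setOf_X_mem_le (P : Ideal (MvPolynomial σ R)) :
    Ideal.span (X '' {i | X i ∈ P}) ≤ P :=
  span_X_image_le_iff.2 fun _ hi => hi

theorem setOf_X_mem_span_X_image [Nontrivial R] (G : Set σ) :
    {i | X i ∈ Ideal.span (X '' G : Set (MvPolynomial σ R))} = G :=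
  Set.ext fun _ => X_mem_span_X_image_iff

/- Every prime over `I` contains the prime generated by the variables it contains; the hypothesis
is that this smaller prime still contains `I`, as happens for monomial ideals. -/
theorem mem_minimalPrimes_iff_of_le_span_X_image [IsDomain R] {I : Ideal (MvPolynomial σ R)}
    (hI : ∀ P : Ideal (MvPolynomial σ R), P.IsPrime → I ≤ P → I ≤ Ideal.span (X '' {i | X i ∈ P}))
    (P : Ideal (MvPolynomial σ R)) :
    P ∈ I.minimalPrimes ↔ ∃ G : Set σ, P = Ideal.span (X '' G) ∧ I ≤ Ideal.span (X '' G) ∧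
      ∀ G' : Set σ, I ≤ Ideal.span (X '' G') → G' ⊆ G → G' = G := by
  constructor
  · rintro ⟨⟨hP, hIP⟩, hmin⟩
    have hle := span_X_image_setOf_X_mem_le P
    have hPG := le_antisymm (hmin ⟨isPrime_span_X_image _, hI P hP hIP⟩ hle) hle
    refine ⟨_, hPG, hI P hP hIP, fun G' hIG' hG' => hG'.antisymm ?_⟩
    rw [← span_X_image_le_span_X_image_iff (R := R), ← hPG] at hG' ⊢
    exact hmin ⟨isPrime_span_X_image _, hIG'⟩ hG'
  · rintro ⟨G, rfl, hIG, hmin⟩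
    refine ⟨⟨isPrime_span_X_image G, hIG⟩, fun Q ⟨hQ, hIQ⟩ hQG => ?_⟩
    have hsub : {i | X i ∈ Q} ⊆ G :=
      span_X_image_le_span_X_image_iff.1 ((span_X_image_setOf_X_mem_le Q).trans hQG)
    rw [← hmin _ (hI Q hQ hIQ) hsub]
    exact span_X_image_setOf_X_mem_le Q

end SpanX

section Interpolation

variable {σ ι K : Type*} [Field K] [Fintype K] [Finite σ]

theorem exists_eval_eq (g : (σ → K) → K) : ∃ p : MvPolynomial σ K, ∀ x, eval x p = g x := by
  obtain ⟨p, -, hp⟩ := Submodule.mem_map.1 <|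
    (map_restrict_dom_evalₗ K σ).symm ▸ Submodule.mem_top (x := g)
  exact ⟨p, congrFun hp⟩

/- A polynomial supported on `G` sees a point only through its restriction to `G`; conversely,
over a finite field every function of the restricted point is a polynomial. -/
theorem exists_mem_supported_eval_eq_iff (s : ι → σ → K) (t : ι → K) (G : Set σ) :
    (∃ f ∈ supported K G, ∀ j, eval (s j) f = t j) ↔
      t.FactorsThrough fun j => G.domRestrict (s j) := by
  simp only [supported_eq_range_rename, AlgHom.mem_range, exists_exists_eq_and, eval_rename]
  constructor
  · rintro ⟨p, hp⟩ j l hjl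
    rw [← hp, ← hp]
    exact congrArg (eval · p) hjl
  · intro ht
    obtain ⟨p, hp⟩ := exists_eval_eq (extend (fun j => G.domRestrict (s j)) t 0)
    exact ⟨p, fun j => (hp _).trans (ht.extend_apply 0 j)⟩

end Interpolation

section PairMonomial

variable {k : Type*} [Field k] [DecidableEq k] {n m : ℕ}

theorem pairMonomial_mem_iff {P : Ideal (MvPolynomial (Fin n) k)} [P.IsPrime] {p q : Fin n → k} :
    pairMonomial p q ∈ P ↔ ∃ i, p i ≠ q i ∧ X i ∈ P := by
  simp [pairMonomial, Ideal.IsPrime.prod_mem_iff]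

noncomputable def pairMonomialIdeal (s : Fin m → Fin n → k) (t : Fin m → k) :
    Ideal (MvPolynomial (Fin n) k) :=
  Ideal.span {M | ∃ j l, t j ≠ t l ∧ M = pairMonomial (s j) (s l)}

theorem pairMonomialIdeal_le_iff (s : Fin m → Fin n → k) (t : Fin m → k)
    (P : Ideal (MvPolynomial (Fin n) k)) [P.IsPrime] :
    pairMonomialIdeal s t ≤ P ↔ t.FactorsThrough fun j => {i | X i ∈ P}.domRestrict (s j) := by
  simp only [pairMonomialIdeal, Ideal.span_le, Set.ofPred_subset]
  constructor
  · intro h j l hjl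
    by_contra ht
    obtain ⟨i, hne, hi⟩ := pairMonomial_mem_iff.1 (h _ ⟨j, l, ht, rfl⟩)
    exact hne (congrFun hjl ⟨i, hi⟩)
  · rintro ht _ ⟨j, l, hne, rfl⟩
    refine pairMonomial_mem_iff.2 ?_
    by_contra! h
    exact hne (ht (funext fun i => not_not.1 fun hi => h i hi i.2))

theorem pairMonomialIdeal_le_span_X_image_setOf_X_mem (s : Fin m → Fin n → k) (t : Fin m → k)
    (P : Ideal (MvPolynomial (Fin n) k)) [P.IsPrime] (h : pairMonomialIdeal s t ≤ P) :
    pairMonomialIdeal s t ≤ Ideal.span (X '' {i | X i ∈ P}) := by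
  rwa [pairMonomialIdeal_le_iff, setOf_X_mem_span_X_image, ← pairMonomialIdeal_le_iff]

theorem pairMonomialIdeal_le_span_X_image_iff [Fintype k] (s : Fin m → Fin n → k)
    (t : Fin m → k) (G : Set (Fin n)) :
    pairMonomialIdeal s t ≤ Ideal.span (X '' G) ↔
      ∃ f ∈ supported k G, ∀ j, eval (s j) f = t j := by
  rw [pairMonomialIdeal_le_iff, setOf_X_mem_span_X_image, exists_mem_supported_eval_eq_iff]

end PairMonomial

/-- Over a finite field `k`, with data `(s j, t j)` and `M_X` the
ideal generated by all monomials `m(s j, s l)` with `t j ≠ t l`, a prime ideal `P`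
is a minimal prime over `M_X` iff `P = ⟨x i : i ∈ G⟩` for some subset `G` that is
minimal with respect to inclusion among the subsets `G'` supporting a polynomial
fitting the data. -/
theorem minimalPrimes_iff_minimal_variable_sets
    (k : Type*) [Field k] [Fintype k] [DecidableEq k] (n m : ℕ)
    (s : Fin m → Fin n → k) (t : Fin m → k) (P : Ideal (MvPolynomial (Fin n) k)) :
    P ∈ (Ideal.span {M : MvPolynomial (Fin n) k |
          ∃ j l, t j ≠ t l ∧ M = pairMonomial (s j) (s l)}).minimalPrimes ↔
      ∃ G : Set (Fin n), P = Ideal.span (MvPolynomial.X '' G) ∧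
        (∃ f ∈ MvPolynomial.supported k G, ∀ j, MvPolynomial.eval (s j) f = t j) ∧
        ∀ G' : Set (Fin n),
          (∃ f ∈ MvPolynomial.supported k G', ∀ j, MvPolynomial.eval (s j) f = t j) →
          G' ⊆ G → G' = G := by
  show P ∈ (pairMonomialIdeal s t).minimalPrimes ↔ _
  simp only [← pairMonomialIdeal_le_span_X_image_iff]
  exact mem_minimalPrimes_iff_of_le_span_X_image
    (fun Q _ => pairMonomialIdeal_le_span_X_image_setOf_X_mem s t Q) P
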